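/- Let d ≥ 1 and let f and f̃ be sp-triangular homomorphisms of Λ with coefficient families m and m̃ respectively. If m_{(1^i),(1^j)} = m̃_{(1^i),(1^j)} for all i > j ≥ 0 with i − j < d, then m_{λμ} = m̃_{λμ} for every pair of partitions μ ≤ λ with |λ| − |μ| < d. -/

import Mathlib

open scoped BigOperators

noncomputable section

/-- The ring `Λ = ℝ[h₁, h₂, …]`: the variable `n : ℕ` represents `h_{n+1}`. -/
abbrev Lam : Type := MvPolynomial ℕ ℝ

/-- `H m` is the generator `h_m` of `Λ` for `m ≥ 1`, with the conventions `h_0 = 1`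
and `h_m = 0` for `m < 0`. -/
def H (m : ℤ) : Lam :=
  if 1 ≤ m then MvPolynomial.X (m.toNat - 1) else if m = 0 then 1 else 0

/-- A partition: an antitone, eventually-zero sequence of natural numbers;
`parts 0` is the first part `λ₁`. -/
structure Ptn where
  parts : ℕ → ℕ
  antitone' : ∀ ⦃i j : ℕ⦄, i ≤ j → parts j ≤ parts i
  eventually_zero : ∃ N, ∀ i, N ≤ i → parts i = 0

namespace Ptn

/-- The number of (nonzero) parts of a partition. -/
def len (μ : Ptn) : ℕ := sInf {N | ∀ i, N ≤ i → μ.parts i = 0}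

/-- The size `|μ| = μ₁ + μ₂ + ⋯` of a partition. -/
def size (μ : Ptn) : ℕ := ∑ᶠ i, μ.parts i

/-- Extended dominance order: `μ.dle lam` iff `μ₁ + ⋯ + μ_k ≤ lam₁ + ⋯ + lam_k` for all `k`. -/
def dle (μ lam : Ptn) : Prop :=
  ∀ k : ℕ, ∑ i ∈ Finset.range k, μ.parts i ≤ ∑ i ∈ Finset.range k, lam.parts i

end Ptn

/-- The Schur function `s_λ = det(h_{λ_i - i + j})_{1 ≤ i,j ≤ len λ}` in `Λ`. -/
def sF (lam : Ptn) : Lam :=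
  (Matrix.of fun i j : Fin lam.len => H ((lam.parts i.1 : ℤ) - i.1 + j.1)).det

/-- The symplectic universal character
`sp_λ = ½ · det(h_{λ_i - i + j} + h_{λ_i - i - j + 2})_{1 ≤ i,j ≤ len λ}`, with `sp_∅ = 1`. -/
def spF (lam : Ptn) : Lam :=
  if lam.len = 0 then 1 else
    (2⁻¹ : ℝ) • (Matrix.of fun i j : Fin lam.len =>
      H ((lam.parts i.1 : ℤ) - i.1 + j.1) + H ((lam.parts i.1 : ℤ) - i.1 - j.1)).det

/-- `f` is an sp-triangular homomorphism with coefficient family `m`: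
`m lam lam = 1`, `m lam mu = 0` unless `mu ≤ lam` in extended dominance order, and
`f(s_λ) = ∑_{μ} m_{λμ} sp_μ` for every partition `λ`. -/
def IsSpTriangular (f : Lam →ₐ[ℝ] Lam) (m : Ptn → Ptn → ℝ) : Prop :=
  (∀ lam, m lam lam = 1) ∧
  (∀ lam mu, m lam mu ≠ 0 → mu.dle lam) ∧
  (∀ lam, f (sF lam) = ∑ᶠ mu : Ptn, m lam mu • spF mu)

/-- The column partition `(1^i)`. -/
def colP (i : ℕ) : Ptn where
  parts := fun k => if k < i then 1 else 0
  antitone' := by intro k l hkl; split_ifs <;> omega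
  eventually_zero := ⟨i, fun k hk => by split_ifs <;> omega⟩

/-- The one-row partition `(k)`. -/
def rowP (k : ℕ) : Ptn where
  parts := fun i => if i = 0 then k else 0
  antitone' := by intro i j hij; split_ifs <;> omega
  eventually_zero := ⟨1, fun i hi => by split_ifs <;> omega⟩

/-- The rectangular partition `(k^d)`: `d` parts equal to `k`. -/
def rectP (k d : ℕ) : Ptn where
  parts := fun i => if i < d then k else 0
  antitone' := by intro i j hij; split_ifs <;> omega
  eventually_zero := ⟨d, fun i hi => by split_ifs <;> omega⟩

/-- The empty partition `∅`. -/
def emptyP : Ptn where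
  parts := fun _ => 0
  antitone' := by intro i j _; exact le_rfl
  eventually_zero := ⟨0, fun _ _ => rfl⟩

/-- The hook partition `(a, 1^b)`: one part `a ≥ 1` followed by `b` parts equal to `1`. -/
def hookP (a b : ℕ) (ha : 1 ≤ a) : Ptn where
  parts := fun i => if i = 0 then a else if i ≤ b then 1 else 0
  antitone' := by intro i j hij; split_ifs <;> omega
  eventually_zero := ⟨b + 1, fun i hi => by split_ifs <;> omega⟩

/-- The complement of `μ` in the `ℓ × m` rectangle, rotated by 180°:
its `i`-th part (0-indexed, `i < ℓ`) is `m - μ_{ℓ-i}`. -/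
def complP (ℓ m : ℕ) (μ : Ptn) : Ptn where
  parts := fun i => if i < ℓ then m - μ.parts (ℓ - 1 - i) else 0
  antitone' := by
    intro i j hij; split_ifs with hj hi
    · exact Nat.sub_le_sub_left (μ.antitone' (by omega)) m
    · omega
    · exact Nat.zero_le _
    · exact le_rfl
  eventually_zero := ⟨ℓ, fun i hi => by split_ifs <;> omega⟩

open Classical in
/-- The complete homogeneous symmetric power series of degree `m` in the variables from `S`:
the sum of all monomials of degree `m` supported on `S`; it is `1` for `m = 0` and `0` for
`m < 0`. -/
def hOn {σ : Type} (S : Set σ) (m : ℤ) : MvPowerSeries σ ℝ :=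
  fun d => if 0 ≤ m ∧ ((d.sum fun _ e => e : ℕ) : ℤ) = m ∧ (↑d.support : Set σ) ⊆ S then 1 else 0

open Classical in
/-- `p(x_v)`: the one-variable power series with coefficient sequence `a`, evaluated at the
variable `v`. -/
def pAt {σ : Type} (a : ℕ → ℝ) (v : σ) : MvPowerSeries σ ℝ :=
  fun d => if (↑d.support : Set σ) ⊆ ({v} : Set σ) then a (d v) else 0

/-- The degree-`N` homogeneous component of a multivariate power series. -/
def homComp {σ : Type} (N : ℕ) (F : MvPowerSeries σ ℝ) : MvPowerSeries σ ℝ :=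
  fun d => if (d.sum fun _ e => e) = N then MvPowerSeries.coeff d F else 0

/-- `∏_{1 ≤ i < j ≤ n} (1 - x_i x_j)` in `ℝ[[x_1, …, x_n]]`. -/
def kappaDen (n : ℕ) : MvPowerSeries (Fin n) ℝ :=
  ∏ q ∈ Finset.univ.filter (fun q : Fin n × Fin n => q.1 < q.2),
    (1 - MvPowerSeries.X q.1 * MvPowerSeries.X q.2)

/-- `κ_p^{(n)} = ∏_{i=1}^n p(x_i) / ∏_{1 ≤ i < j ≤ n} (1 - x_i x_j)` in `ℝ[[x_1, …, x_n]]`,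
where `a` is the coefficient sequence of `p`. -/
def kappaN (a : ℕ → ℝ) (n : ℕ) : MvPowerSeries (Fin n) ℝ :=
  (∏ i : Fin n, pAt a i) * MvPowerSeries.invOfUnit (kappaDen n) 1

/-- The Schur polynomial `s_μ(x_1, …, x_n) = det(h_{μ_i - i + j}(x_1, …, x_n))_{1 ≤ i,j ≤ n}`
as a power series in `ℝ[[x_1, …, x_n]]`. -/
def schurPow (n : ℕ) (p : ℕ → ℕ) : MvPowerSeries (Fin n) ℝ :=
  (Matrix.of fun i j : Fin n => hOn (Set.univ : Set (Fin n)) ((p i.1 : ℤ) - i.1 + j.1)).det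

/-- `c` is the family of coefficients expressing the degree-`n` homogeneous component of `F`
in the basis of Schur polynomials `{s_μ(x_1, …, x_n) : |μ| = n}`. -/
def SchurExpansion (n : ℕ) (F : MvPowerSeries (Fin n) ℝ) (c : Ptn → ℝ) : Prop :=
  homComp n F = ∑ᶠ (μ : Ptn) (_ : μ.size = n), c μ • schurPow n μ.parts

/-- `x = ⟨κ_p, s_ν⟩`: the coefficient of `s_ν(x_1, …, x_n)` (`n = |ν|`) in the Schur-basis
expansion of the degree-`n` homogeneous component of `κ_p^{(n)}`. -/
def KappaCoeff (a : ℕ → ℝ) (ν : Ptn) (x : ℝ) : Prop :=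
  ∃ c : Ptn → ℝ, SchurExpansion ν.size (kappaN a ν.size) c ∧ c ν = x

/-- The power series `p` with coefficient sequence `a` is κ-positive:
`⟨κ_p, s_ν⟩ ≥ 0` for every (nonempty) partition `ν`. -/
def KappaPositive (a : ℕ → ℝ) : Prop :=
  ∀ ν : Ptn, ν.len ≠ 0 → ∀ x : ℝ, KappaCoeff a ν x → 0 ≤ x

/-- `g_m(y) = ∑_{k=0}^m a_k h_{m-k}(y)` in the variables from `S` (`0` for `m < 0`). -/
def gY {σ : Type} (a : ℕ → ℝ) (S : Set σ) (m : ℤ) : MvPowerSeries σ ℝ :=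
  if m < 0 then 0 else ∑ k ∈ Finset.range (m.toNat + 1), a k • hOn S (m - k)

end

/-!
Grade `Λ` by `deg h_k = k`. Then `s_λ` has degree `|λ|` and `sp_λ - s_λ` has degree at most
`|λ| - 2`. By triangularity and the hypothesis on columns, `f(e_n) - f̃(e_n)` has degree at most
`n - d`; since `e_{n+1} = ∑_{k ≤ n} (-1)^k h_{k+1} e_{n-k}` expresses every `h_k` through the
`e_n`, and both maps preserve degree, `f(P) - f̃(P)` has degree at most `deg P - d` for every `P`.
For `P = s_λ` this says that `∑_μ (m_{λμ} - m̃_{λμ}) sp_μ` has degree at most `|λ| - d`.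

The `sp_μ` are unitriangular modulo lower degree with respect to the monomials
`h_ν = h_{ν₁} h_{ν₂} ⋯`: the coefficient of `h_ν` in `sp_ν` is `1`, and for `μ ≠ ν` it vanishes
unless `|μ| > |ν|`, or `|μ| = |ν|` and `∑ μᵢ² < ∑ νᵢ²`. The latter comes from the Jacobi–Trudi
expansion: the term of a permutation `σ` is `∏ h_{μ_i - i + σ(i)}`, and by the rearrangement
inequality `∑ (μ_i - i + σ(i))² > ∑ μ_i²` unless `σ = 1`. Hence every coefficient
`m_{λμ} - m̃_{λμ}` with `|μ| > |λ| - d` vanishes.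
-/

open MvPolynomial Finset

namespace Ptn

lemma ext_parts {μ ν : Ptn} (h : μ.parts = ν.parts) : μ = ν := by
  cases μ; cases ν; simp_all

lemma antitone_parts (μ : Ptn) : Antitone μ.parts := fun _ _ h => μ.antitone' h

lemma parts_eq_zero_of_len_le (μ : Ptn) {i : ℕ} (h : μ.len ≤ i) : μ.parts i = 0 :=
  Nat.sInf_mem (s := {N | ∀ i, N ≤ i → μ.parts i = 0}) μ.eventually_zero i h

lemma one_le_parts_of_lt_len (μ : Ptn) {i : ℕ} (h : i < μ.len) : 1 ≤ μ.parts i := by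
  by_contra h0
  have hlen : μ.len ≤ i := Nat.sInf_le fun j hj => by
    have := μ.antitone' hj
    omega
  omega

lemma size_eq_sum_range (μ : Ptn) {n : ℕ} (h : μ.len ≤ n) :
    μ.size = ∑ i ∈ range n, μ.parts i := by
  refine finsum_eq_finsetSum_of_support_subset _ fun i hi => ?_
  by_contra hi'
  exact hi (μ.parts_eq_zero_of_len_le (by simp at hi'; omega))

lemma size_eq_sum_fin (μ : Ptn) : μ.size = ∑ i : Fin μ.len, μ.parts i := by
  rw [μ.size_eq_sum_range le_rfl, Fin.sum_univ_eq_sum_range]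

lemma len_le_size (μ : Ptn) : μ.len ≤ μ.size := by
  rw [μ.size_eq_sum_range le_rfl]
  simpa using sum_le_sum fun i hi => μ.one_le_parts_of_lt_len (mem_range.1 hi)

lemma parts_le_size (μ : Ptn) (i : ℕ) : μ.parts i ≤ μ.size := by
  rcases lt_or_ge i μ.len with h | h
  · rw [μ.size_eq_sum_range le_rfl]
    exact single_le_sum (fun j _ => Nat.zero_le _) (mem_range.2 h)
  · simp [μ.parts_eq_zero_of_len_le h]

lemma size_le_of_dle {μ lam : Ptn} (h : μ.dle lam) : μ.size ≤ lam.size := by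
  have hk := h (max μ.len lam.len)
  rwa [← μ.size_eq_sum_range (le_max_left _ _), ← lam.size_eq_sum_range (le_max_right _ _)] at hk

lemma finite_dle (lam : Ptn) : {μ : Ptn | μ.dle lam}.Finite := by
  set s := lam.size
  let trunc : Ptn → Fin (s + 1) → ℕ := fun μ i => μ.parts i
  have hsize : ∀ μ ∈ {μ : Ptn | μ.dle lam}, μ.size ≤ s := fun μ hμ => size_le_of_dle hμ
  refine Set.Finite.of_finite_image (f := trunc) ?_
    fun μ hμ ν hν heq => ext_parts <| funext fun i => ?_
  · refine (Set.Finite.pi (t := fun _ => Set.Iic s) fun _ => Set.finite_Iic s).subset ?_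
    rintro _ ⟨μ, hμ, rfl⟩ i -
    exact (μ.parts_le_size i).trans (hsize μ hμ)
  · rcases le_or_gt i s with h | h
    · exact congrFun heq ⟨i, by omega⟩
    · have := μ.len_le_size.trans (hsize μ hμ)
      have := ν.len_le_size.trans (hsize ν hν)
      rw [μ.parts_eq_zero_of_len_le (by omega), ν.parts_eq_zero_of_len_le (by omega)]

lemma le_parts_iff_lt_card (ν : Ptn) {N k i : ℕ} (hN : ν.len ≤ N) (hk : 1 ≤ k) :
    k ≤ ν.parts i ↔ i < #{j ∈ range N | k ≤ ν.parts j} := by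
  constructor
  · intro hi
    have hiN : i < N := by
      by_contra h
      rw [ν.parts_eq_zero_of_len_le (by omega)] at hi
      omega
    refine Nat.lt_of_lt_of_le (by simp) (card_le_card (s := range (i + 1)) fun j hj => ?_)
    simp only [mem_range, mem_filter] at hj ⊢
    exact ⟨by omega, hi.trans (ν.antitone_parts (by omega))⟩
  · intro hi
    by_contra hlt
    refine (card_le_card (t := range i) fun j hj => ?_).not_gt (by simpa using hi)
    simp only [mem_range, mem_filter] at hj ⊢
    by_contra hji
    exact hlt (hj.2.trans (ν.antitone_parts (by omega)))

end Ptn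

lemma len_colP (n : ℕ) : (colP n).len = n := by
  refine le_antisymm (Nat.sInf_le fun i hi => if_neg (by omega)) (le_of_not_gt fun hlt => ?_)
  have := (colP n).parts_eq_zero_of_len_le (i := n - 1) (by omega)
  simp only [colP] at this
  rw [if_pos (by omega)] at this
  exact one_ne_zero this

lemma size_colP (n : ℕ) : (colP n).size = n := by
  rw [(colP n).size_eq_sum_range (len_colP n).le,
    sum_congr rfl fun i hi => show (colP n).parts i = 1 from if_pos (mem_range.1 hi)]
  simp

lemma eq_colP_of_dle_colP {μ : Ptn} {n : ℕ} (h : μ.dle (colP n)) :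
    μ = colP μ.len ∧ μ.len ≤ n := by
  have h0 : μ.parts 0 ≤ 1 := by
    have h1 := h 1
    rw [sum_range_one, sum_range_one] at h1
    exact h1.trans (by simp only [colP]; split_ifs <;> omega)
  refine ⟨Ptn.ext_parts (funext fun k => ?_), ?_⟩
  · simp only [colP]
    split_ifs with hk
    · have := μ.one_le_parts_of_lt_len hk
      have := μ.antitone' (Nat.zero_le k)
      omega
    · exact μ.parts_eq_zero_of_len_le (by omega)
  · simpa [size_colP] using μ.len_le_size.trans (Ptn.size_le_of_dle h)

/-- `m : ℕ →₀ ℕ` is the exponent of the monomial `∏ₙ h_{n+1}^{m n}`, and `partSum g m` is the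
sum of `g` over the parts of that monomial, counted with multiplicity. -/
noncomputable def partSum (g : ℤ → ℤ) : (ℕ →₀ ℕ) →+ ℤ :=
  Finsupp.weight fun n : ℕ => g ((n : ℤ) + 1)

lemma partSum_single (g : ℤ → ℤ) (n e : ℕ) : partSum g (Finsupp.single n e) = e * g (n + 1) := by
  simp [partSum, Finsupp.weight_apply]

/-- Polynomials of weighted degree at most `e`, where `h_k` has weight `k`. -/
noncomputable def degLE (e : ℤ) : Submodule ℝ Lam :=
  restrictSupport ℝ {m | partSum id m ≤ e}

lemma mem_degLE_of_le {e e' : ℤ} (h : e ≤ e') {P : Lam} (hP : P ∈ degLE e) : P ∈ degLE e' :=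
  restrictSupport_mono ℝ (fun _ hm => le_trans hm h) hP

lemma coeff_eq_zero_of_mem_degLE {e : ℤ} {P : Lam} (hP : P ∈ degLE e) {m : ℕ →₀ ℕ}
    (hm : e < partSum id m) : coeff m P = 0 :=
  notMem_support_iff.1 fun h => (hm.trans_le (hP h)).false

lemma monomial_mem_degLE {e : ℤ} {m : ℕ →₀ ℕ} (hm : partSum id m ≤ e) (r : ℝ) :
    monomial m r ∈ degLE e :=
  (monomial_mem_restrictSupport ℝ).2 (Or.inl hm)

lemma one_mem_degLE {e : ℤ} (he : 0 ≤ e) : (1 : Lam) ∈ degLE e :=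
  monomial_mem_degLE (by simpa using he) 1

lemma mul_mem_degLE {a b : ℤ} {P Q : Lam} (hP : P ∈ degLE a) (hQ : Q ∈ degLE b) :
    P * Q ∈ degLE (a + b) := by
  classical
  intro m hm
  obtain ⟨m₁, hm₁, m₂, hm₂, rfl⟩ := Finset.mem_add.1 (support_mul P Q hm)
  simpa using add_le_add (hP hm₁) (hQ hm₂)

lemma prod_mem_degLE {ι : Type*} (s : Finset ι) {x : ι → Lam} {e : ι → ℤ}
    (h : ∀ i ∈ s, x i ∈ degLE (e i)) : ∏ i ∈ s, x i ∈ degLE (∑ i ∈ s, e i) := by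
  classical
  induction s using Finset.induction_on with
  | empty => simpa using one_mem_degLE le_rfl
  | insert a s ha ih =>
    rw [prod_insert ha, sum_insert ha]
    exact mul_mem_degLE (h a (mem_insert_self a s)) (ih fun i hi => h i (mem_insert_of_mem hi))

lemma prod_sub_prod_mem_degLE {ι : Type*} (s : Finset ι) {x y : ι → Lam} {e : ι → ℤ} {c : ℤ}
    (hx : ∀ i ∈ s, x i ∈ degLE (e i)) (hy : ∀ i ∈ s, y i ∈ degLE (e i))
    (hxy : ∀ i ∈ s, x i - y i ∈ degLE (e i - c)) :
    ∏ i ∈ s, x i - ∏ i ∈ s, y i ∈ degLE (∑ i ∈ s, e i - c) := by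
  classical
  induction s using Finset.induction_on with
  | empty => simp
  | insert a s ha ih =>
    have hs : ∀ i ∈ s, i ∈ insert a s := fun i hi => mem_insert_of_mem hi
    rw [prod_insert ha, prod_insert ha, sum_insert ha]
    have key : x a * ∏ i ∈ s, x i - y a * ∏ i ∈ s, y i
        = x a * (∏ i ∈ s, x i - ∏ i ∈ s, y i) + (x a - y a) * ∏ i ∈ s, y i := by ring
    rw [key]
    have h₁ := mul_mem_degLE (hx a (mem_insert_self a s))
      (ih (fun i hi => hx i (hs i hi)) (fun i hi => hy i (hs i hi)) fun i hi => hxy i (hs i hi))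
    have h₂ := mul_mem_degLE (hxy a (mem_insert_self a s))
      (prod_mem_degLE s fun i hi => hy i (hs i hi))
    exact add_mem (mem_degLE_of_le (le_of_eq (by ring)) h₁)
      (mem_degLE_of_le (le_of_eq (by ring)) h₂)

section Det

variable {r : ℕ} (u v : Fin r → ℤ)

lemma det_mem_degLE {M : Matrix (Fin r) (Fin r) Lam} (hM : ∀ i j, M i j ∈ degLE (u i + v j)) :
    M.det ∈ degLE (∑ i, u i + ∑ j, v j) := by
  rw [Matrix.det_apply]
  refine Submodule.sum_mem _ fun σ _ => ?_
  rw [Units.smul_def]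
  refine zsmul_mem ?_ _
  have h := prod_mem_degLE univ fun i _ => hM (σ i) i
  rwa [sum_add_distrib, Equiv.sum_comp σ u] at h

lemma det_sub_det_mem_degLE {c : ℤ} {M M' : Matrix (Fin r) (Fin r) Lam}
    (hM : ∀ i j, M i j ∈ degLE (u i + v j)) (hM' : ∀ i j, M' i j ∈ degLE (u i + v j))
    (hMM' : ∀ i j, M i j - M' i j ∈ degLE (u i + v j - c)) :
    M.det - M'.det ∈ degLE (∑ i, u i + ∑ j, v j - c) := by
  rw [Matrix.det_apply, Matrix.det_apply, ← sum_sub_distrib]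
  refine Submodule.sum_mem _ fun σ _ => ?_
  rw [Units.smul_def, Units.smul_def, ← smul_sub]
  refine zsmul_mem ?_ _
  have h := prod_sub_prod_mem_degLE univ (fun i _ => hM (σ i) i) (fun i _ => hM' (σ i) i)
    fun i _ => hMM' (σ i) i
  rwa [sum_add_distrib, Equiv.sum_comp σ u] at h

end Det

/-- The exponent of the monomial `h_k` (so `0` for `k ≤ 0`). -/
noncomputable def hExp (k : ℤ) : ℕ →₀ ℕ :=
  if 1 ≤ k then Finsupp.single (k.toNat - 1) 1 else 0

lemma H_of_neg {k : ℤ} (hk : k < 0) : H k = 0 := by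
  rw [H, if_neg (by omega), if_neg (by omega)]

lemma H_eq_monomial {k : ℤ} (hk : 0 ≤ k) : H k = monomial (hExp k) 1 := by
  rcases eq_or_lt_of_le hk with rfl | hk
  · simp [H, hExp]
  · have hk : 1 ≤ k := hk
    rw [H, hExp, if_pos hk, if_pos hk, X]

lemma H_natCast_add_one (k : ℕ) : H (k + 1) = X k := by
  rw [H, if_pos (by omega), show ((k : ℤ) + 1).toNat - 1 = k by omega]

lemma partSum_hExp {g : ℤ → ℤ} (hg : g 0 = 0) {k : ℤ} (hk : 0 ≤ k) : partSum g (hExp k) = g k := by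
  rcases eq_or_lt_of_le hk with rfl | hk
  · simp [hExp, hg]
  · have hk : 1 ≤ k := hk
    rw [hExp, if_pos hk, partSum_single, Nat.cast_one, one_mul]
    congr 1
    omega

lemma H_mem_degLE (k : ℤ) : H k ∈ degLE k := by
  rcases lt_or_ge k 0 with hk | hk
  · simp [H_of_neg hk]
  · rw [H_eq_monomial hk]
    exact monomial_mem_degLE (by simp [partSum_hExp (g := id) rfl hk]) 1

lemma prod_H_eq_monomial {ι : Type*} [Fintype ι] {c : ι → ℤ} (hc : ∀ i, 0 ≤ c i) :
    ∏ i, H (c i) = monomial (∑ i, hExp (c i)) 1 := by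
  rw [monomial_sum_one]
  exact prod_congr rfl fun i _ => H_eq_monomial (hc i)

lemma coeff_prod_H_ne_zero {ι : Type*} [Fintype ι] {c : ι → ℤ} {m : ℕ →₀ ℕ}
    (h : coeff m (∏ i, H (c i)) ≠ 0) : (∀ i, 0 ≤ c i) ∧ ∑ i, hExp (c i) = m := by
  classical
  have hc : ∀ i, 0 ≤ c i := fun i => by
    by_contra hi
    exact h (by rw [prod_eq_zero (mem_univ i) (H_of_neg (by omega)), coeff_zero])
  rw [prod_H_eq_monomial hc, coeff_monomial] at h
  exact ⟨hc, by_contra fun hm => h (if_neg hm)⟩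

lemma sum_jacobiTrudi_weights (ν : Ptn) :
    ∑ i : Fin ν.len, ((ν.parts i : ℤ) - i) + ∑ j : Fin ν.len, (j : ℤ) = ν.size := by
  rw [ν.size_eq_sum_fin, sum_sub_distrib]
  push_cast
  ring

lemma sF_mem_degLE (ν : Ptn) : sF ν ∈ degLE ν.size := by
  rw [← sum_jacobiTrudi_weights]
  exact det_mem_degLE _ _ fun i j => H_mem_degLE _

/-- The `sp` matrix is the Jacobi–Trudi matrix with its first column doubled, plus entries
`h_{ν_i - i - j}` (`j ≥ 1`) whose degree is lower by `2j`. -/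
lemma spF_sub_sF_mem_degLE (ν : Ptn) : spF ν - sF ν ∈ degLE (ν.size - 2) := by
  rcases Nat.eq_zero_or_pos ν.len with h0 | hr
  · have : IsEmpty (Fin ν.len) := by rw [h0]; infer_instance
    simp [spF, sF, h0, Matrix.det_isEmpty]
  set u : Fin ν.len → ℤ := fun i => (ν.parts i : ℤ) - i
  let e₀ : Fin ν.len := ⟨0, hr⟩
  let D : Fin ν.len → Lam := fun j => if j = e₀ then 2 else 1
  have hD : ∏ j, D j = 2 := by simp [D]
  have hsF : sF ν = (2⁻¹ : ℝ) • (Matrix.of fun i j => D j * H (u i + j)).det := by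
    have h := Matrix.det_mul_row D (Matrix.of fun i j : Fin ν.len => H (u i + j))
    simp only [Matrix.of_apply] at h
    rw [h, hD, sF, two_mul, smul_add, ← add_smul]
    norm_num [u]
  have hspF : spF ν
      = (2⁻¹ : ℝ) • (Matrix.of fun i j : Fin ν.len => H (u i + j) + H (u i - j)).det := by
    rw [spF, if_neg hr.ne']
  have hDH : ∀ i (j : Fin ν.len), D j * H (u i + j) ∈ degLE (u i + j) := fun i j => by
    by_cases hj : j = e₀
    · simpa [D, hj, two_mul] using add_mem (H_mem_degLE (u i + j)) (H_mem_degLE (u i + j))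
    · simpa [D, hj] using H_mem_degLE (u i + j)
  have hminus : ∀ i (j : Fin ν.len), H (u i - j) ∈ degLE (u i + j) := fun i j =>
    mem_degLE_of_le (by omega) (H_mem_degLE _)
  rw [hsF, hspF, ← smul_sub, ← sum_jacobiTrudi_weights]
  refine Submodule.smul_mem _ _ (det_sub_det_mem_degLE u _ (fun i j => ?_) hDH fun i j => ?_)
  · exact add_mem (H_mem_degLE _) (hminus i j)
  · by_cases hj : j = e₀
    · simp [D, hj, e₀, two_mul]
    · have hj' : 1 ≤ (j : ℤ) := by
        have : (j : ℕ) ≠ 0 := fun h => hj (Fin.ext h)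
        omega
      simpa [D, hj] using mem_degLE_of_le (by omega) (H_mem_degLE (u i - j))

lemma spF_mem_degLE (ν : Ptn) : spF ν ∈ degLE ν.size := by
  simpa using add_mem (mem_degLE_of_le (by omega) (spF_sub_sF_mem_degLE ν)) (sF_mem_degLE ν)

/-- The exponent of `h_ν = h_{ν₁} h_{ν₂} ⋯`. -/
noncomputable def monoOf (ν : Ptn) : ℕ →₀ ℕ := ∑ i : Fin ν.len, hExp (ν.parts i)

lemma partSum_sum_hExp {g : ℤ → ℤ} (hg : g 0 = 0) {ι : Type*} [Fintype ι] {c : ι → ℤ}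
    (hc : ∀ i, 0 ≤ c i) : partSum g (∑ i, hExp (c i)) = ∑ i, g (c i) := by
  rw [map_sum]
  exact sum_congr rfl fun i _ => partSum_hExp hg (hc i)

lemma partSum_monoOf {g : ℤ → ℤ} (hg : g 0 = 0) (ν : Ptn) {N : ℕ} (hN : ν.len ≤ N) :
    partSum g (monoOf ν) = ∑ i ∈ range N, g (ν.parts i) := by
  rw [monoOf, partSum_sum_hExp hg fun i => by positivity,
    Fin.sum_univ_eq_sum_range (fun i => g (ν.parts i))]
  refine sum_subset (range_subset_range.2 hN) fun i _ hi => ?_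
  rw [ν.parts_eq_zero_of_len_le (by simpa using hi), Nat.cast_zero, hg]

lemma partSum_id_monoOf (ν : Ptn) : partSum id (monoOf ν) = ν.size := by
  rw [partSum_monoOf rfl ν le_rfl, ν.size_eq_sum_range le_rfl]
  simp

/-- For `k ≥ 1` the number of parts `≥ k` can be read off `monoOf`, and it determines which
parts are `≥ k`. -/
lemma monoOf_injective : Function.Injective monoOf := by
  intro μ ν h
  set N := max μ.len ν.len
  have hcard : ∀ k, 1 ≤ k → #{j ∈ range N | k ≤ μ.parts j} = #{j ∈ range N | k ≤ ν.parts j} := by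
    intro k hk
    have hk' := congrArg (partSum fun x => if (k : ℤ) ≤ x then 1 else 0) h
    rw [partSum_monoOf (by simp; omega) μ (le_max_left _ _),
      partSum_monoOf (by simp; omega) ν (le_max_right _ _)] at hk'
    simpa [sum_boole] using hk'
  have hle : ∀ k i, 1 ≤ k → (k ≤ μ.parts i ↔ k ≤ ν.parts i) := fun k i hk => by
    rw [μ.le_parts_iff_lt_card (le_max_left _ _) hk, ν.le_parts_iff_lt_card (le_max_right _ _) hk,
      hcard k hk]
  refine Ptn.ext_parts (funext fun i => le_antisymm ?_ ?_)
  · rcases Nat.eq_zero_or_pos (μ.parts i) with h0 | h0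
    · omega
    · exact (hle _ i h0).1 le_rfl
  · rcases Nat.eq_zero_or_pos (ν.parts i) with h0 | h0
    · omega
    · exact (hle _ i h0).2 le_rfl

lemma sum_sq_lt_sum_sq_perm {r : ℕ} {a : Fin r → ℤ} (ha : StrictAnti a)
    {σ : Equiv.Perm (Fin r)} (hσ : σ ≠ 1) :
    ∑ i, (a i + i) ^ 2 < ∑ i, (a i + σ i) ^ 2 := by
  have hanti : Antivary a fun i : Fin r => (i : ℤ) := fun i j hij =>
    (ha (Fin.lt_def.2 (Int.ofNat_lt.1 hij))).le
  have hmono : ¬Antivary a ((fun i : Fin r => (i : ℤ)) ∘ σ) := by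
    intro h
    have hσmono : StrictMono σ := fun i j hij => by
      by_contra hji
      have hlt : σ j < σ i := lt_of_le_of_ne (not_lt.1 hji) (σ.injective.ne hij.ne')
      exact (ha hij).not_ge (@h j i (Int.ofNat_lt.2 (Fin.lt_def.1 hlt)))
    exact hσ (Equiv.ext fun i => hσmono.apply_eq)
  have hlt := (hanti.sum_mul_lt_sum_mul_comp_perm_iff (σ := σ)).2 hmono
  simp only [smul_eq_mul] at hlt
  have hsq : ∑ i : Fin r, ((σ i : ℕ) : ℤ) ^ 2 = ∑ i : Fin r, ((i : ℕ) : ℤ) ^ 2 :=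
    Equiv.sum_comp σ fun i : Fin r => ((i : ℕ) : ℤ) ^ 2
  simp only [add_sq, sum_add_distrib, mul_assoc, ← mul_sum, hsq]
  linarith

lemma sF_eq_sum_perm (ν : Ptn) :
    sF ν = ∑ σ : Equiv.Perm (Fin ν.len),
      Equiv.Perm.sign σ • ∏ i : Fin ν.len, H ((ν.parts i : ℤ) - i + σ i) := by
  rw [sF, ← Matrix.det_transpose, Matrix.det_apply]
  rfl

lemma coeff_ne_zero_of_coeff_units_smul_ne_zero {m : ℕ →₀ ℕ} {u : ℤˣ} {P : Lam}
    (h : coeff m (u • P) ≠ 0) : coeff m P ≠ 0 := fun hP =>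
  h (by rw [Units.smul_def, coeff_smul, hP, smul_zero])

/-- Only the identity term of the Jacobi–Trudi expansion of `s_ν` can contain `h_ν`: any other
term has a strictly larger sum of squared parts. -/
lemma partSum_sq_monoOf_lt (ν : Ptn) {σ : Equiv.Perm (Fin ν.len)} (hσ : σ ≠ 1)
    (hc : ∀ i : Fin ν.len, 0 ≤ (ν.parts i : ℤ) - i + σ i) :
    partSum (· ^ 2) (monoOf ν)
      < partSum (· ^ 2) (∑ i : Fin ν.len, hExp ((ν.parts i : ℤ) - i + σ i)) := by
  have ha : StrictAnti fun i : Fin ν.len => (ν.parts i : ℤ) - i := fun i j hij => by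
    have := ν.antitone_parts (Fin.le_def.1 hij.le)
    have : (i : ℕ) < j := hij
    simp only
    omega
  rw [partSum_sum_hExp (by simp) hc, partSum_monoOf (by simp) ν le_rfl,
    ← Fin.sum_univ_eq_sum_range (fun i => ((ν.parts i : ℤ)) ^ 2)]
  simpa using sum_sq_lt_sum_sq_perm ha hσ

lemma coeff_monoOf_sF_self (ν : Ptn) : coeff (monoOf ν) (sF ν) = 1 := by
  rw [sF_eq_sum_perm, coeff_sum, sum_eq_single 1 (fun σ _ hσ => ?_) (by simp)]
  · rw [prod_H_eq_monomial (by simp)]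
    simp [monoOf]
  · by_contra h
    obtain ⟨hc, hm⟩ := coeff_prod_H_ne_zero (coeff_ne_zero_of_coeff_units_smul_ne_zero h)
    exact (partSum_sq_monoOf_lt ν hσ hc).ne (by rw [hm])

lemma partSum_sq_lt_of_coeff_sF_ne_zero {μ ν : Ptn} (h : coeff (monoOf μ) (sF ν) ≠ 0)
    (hne : ν ≠ μ) : partSum (· ^ 2) (monoOf ν) < partSum (· ^ 2) (monoOf μ) := by
  rw [sF_eq_sum_perm, coeff_sum] at h
  obtain ⟨σ, -, hσ⟩ := exists_ne_zero_of_sum_ne_zero h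
  obtain ⟨hc, hm⟩ := coeff_prod_H_ne_zero (coeff_ne_zero_of_coeff_units_smul_ne_zero hσ)
  rcases eq_or_ne σ 1 with rfl | hσ1
  · exact absurd (monoOf_injective (by simpa [monoOf] using hm)) hne
  · exact hm ▸ partSum_sq_monoOf_lt ν hσ1 hc

lemma coeff_monoOf_spF_eq_coeff_sF {μ ν : Ptn} (h : ν.size ≤ μ.size) :
    coeff (monoOf μ) (spF ν) = coeff (monoOf μ) (sF ν) := by
  have := coeff_eq_zero_of_mem_degLE (spF_sub_sF_mem_degLE ν) (m := monoOf μ)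
    (by rw [partSum_id_monoOf]; omega)
  rwa [coeff_sub, sub_eq_zero] at this

lemma coeff_monoOf_spF_self (ν : Ptn) : coeff (monoOf ν) (spF ν) = 1 := by
  rw [coeff_monoOf_spF_eq_coeff_sF le_rfl, coeff_monoOf_sF_self]

lemma size_le_of_coeff_spF_ne_zero {μ ν : Ptn} (h : coeff (monoOf μ) (spF ν) ≠ 0) :
    μ.size ≤ ν.size := by
  by_contra hlt
  exact h (coeff_eq_zero_of_mem_degLE (spF_mem_degLE ν) (by rw [partSum_id_monoOf]; omega))

/-- The order in which the coefficients of an `sp`-expansion are recovered: larger partitions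
first, and among partitions of equal size, smaller sums of squared parts first. -/
noncomputable def spKey (ν : Ptn) : ℤ ×ₗ ℤ :=
  toLex (-(ν.size : ℤ), partSum (· ^ 2) (monoOf ν))

lemma spKey_lt_of_coeff_spF_ne_zero {μ ν : Ptn} (h : coeff (monoOf μ) (spF ν) ≠ 0)
    (hne : ν ≠ μ) : spKey ν < spKey μ := by
  rw [spKey, spKey, Prod.Lex.toLex_lt_toLex]
  rcases (size_le_of_coeff_spF_ne_zero h).lt_or_eq with hlt | heq
  · left
    omega
  · right
    rw [coeff_monoOf_spF_eq_coeff_sF heq.ge] at h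
    exact ⟨by rw [heq], partSum_sq_lt_of_coeff_sF_ne_zero h hne⟩

/-- Looking at the coefficient of `h_ν` for a `spKey`-minimal `ν` with `c ν ≠ 0` isolates
`c ν`. -/
lemma eq_zero_of_sum_smul_spF_mem_degLE {T : Finset Ptn} {c : Ptn → ℝ} {e : ℤ}
    (h : ∑ ν ∈ T, c ν • spF ν ∈ degLE e) {ν : Ptn} (hν : ν ∈ T) (he : e < ν.size) : c ν = 0 := by
  by_contra hc
  obtain ⟨ν₀, hν₀, hmin⟩ := (T.filter fun ν => e < ν.size ∧ c ν ≠ 0).exists_min_image spKey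
    ⟨ν, mem_filter.2 ⟨hν, he, hc⟩⟩
  obtain ⟨hν₀T, he₀, hc₀⟩ := mem_filter.1 hν₀
  have hcoeff := coeff_eq_zero_of_mem_degLE h (m := monoOf ν₀) (by rwa [partSum_id_monoOf])
  rw [coeff_sum, sum_eq_single_of_mem ν₀ hν₀T fun μ hμ hne => ?_] at hcoeff
  · rw [coeff_smul, coeff_monoOf_spF_self, smul_eq_mul, mul_one] at hcoeff
    exact hc₀ hcoeff
  · rw [coeff_smul, smul_eq_mul]
    by_contra hμ₀
    obtain ⟨hcμ, hspμ⟩ := mul_ne_zero_iff.1 hμ₀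
    have heμ : e < μ.size := he₀.trans_le (by exact_mod_cast size_le_of_coeff_spF_ne_zero hspμ)
    exact (spKey_lt_of_coeff_spF_ne_zero hspμ hne).not_ge
      (hmin μ (mem_filter.2 ⟨hμ, heμ, hcμ⟩))

namespace IsSpTriangular

variable {f g : Lam →ₐ[ℝ] Lam} {m m' : Ptn → Ptn → ℝ}

lemma map_sF_eq_sum (hf : IsSpTriangular f m) (lam : Ptn) :
    f (sF lam) = ∑ μ ∈ (Ptn.finite_dle lam).toFinset, m lam μ • spF μ := by
  rw [hf.2.2 lam]
  refine finsum_eq_finsetSum_of_support_subset _ fun μ hμ => ?_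
  rw [Set.Finite.coe_toFinset]
  by_contra hdle
  have : m lam μ = 0 := not_imp_comm.1 (hf.2.1 lam μ) hdle
  exact hμ (by simp only [this, zero_smul])

lemma map_sF_mem_degLE (hf : IsSpTriangular f m) (lam : Ptn) : f (sF lam) ∈ degLE lam.size := by
  rw [hf.map_sF_eq_sum]
  refine Submodule.sum_mem _ fun μ hμ =>
    Submodule.smul_mem _ _ (mem_degLE_of_le ?_ (spF_mem_degLE μ))
  exact_mod_cast Ptn.size_le_of_dle (by simpa using hμ)

lemma map_sF_colP_sub_mem_degLE {d : ℕ} (hf : IsSpTriangular f m) (hg : IsSpTriangular g m')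
    (hcol : ∀ i j : ℕ, j < i → i - j < d → m (colP i) (colP j) = m' (colP i) (colP j))
    (n : ℕ) : f (sF (colP n)) - g (sF (colP n)) ∈ degLE (n - d) := by
  rw [hf.map_sF_eq_sum, hg.map_sF_eq_sum, ← sum_sub_distrib]
  refine Submodule.sum_mem _ fun μ hμ => ?_
  obtain ⟨hμcol, hlen⟩ := eq_colP_of_dle_colP (by simpa using hμ)
  rw [← sub_smul]
  by_cases hclose : n - μ.len < d
  · have : m (colP n) μ = m' (colP n) μ := by
      rcases hlen.lt_or_eq with hlt | heq
      · rw [hμcol, hcol n μ.len hlt hclose]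
      · rw [hμcol, heq, hf.1, hg.1]
    simp [this]
  · refine Submodule.smul_mem _ _ (mem_degLE_of_le ?_ (spF_mem_degLE μ))
    have : μ.size = μ.len := by rw [hμcol, size_colP, len_colP]
    omega

end IsSpTriangular

/-- The matrix of `e_n = s_{(1^n)}` with its first row replaced by `a`. -/
noncomputable def firstRowMat (a : ℕ → Lam) (n : ℕ) : Matrix (Fin n) (Fin n) Lam :=
  Matrix.of fun i j => if (i : ℕ) = 0 then a j else H (1 + j - i)

lemma sF_colP_eq_det_firstRowMat (n : ℕ) : sF (colP n) = (firstRowMat (fun j => X j) n).det := by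
  suffices ∀ r, (colP n).len = r → sF (colP n) = (firstRowMat (fun j => X j) r).det from
    this n (len_colP n)
  rintro r rfl
  rw [sF]
  congr 1
  ext i j
  have hi : (colP n).parts i = 1 := if_pos (by simpa [len_colP] using i.2)
  simp only [firstRowMat, Matrix.of_apply, hi]
  split_ifs with h0
  · rw [h0, ← H_natCast_add_one]
    push_cast
    ring_nf
  · ring_nf

lemma det_firstRowMat_succ_succ (a : ℕ → Lam) (n : ℕ) :
    (firstRowMat a (n + 2)).det = a 0 * (firstRowMat (fun j => X j) (n + 1)).det
      - (firstRowMat (fun j => a (j + 1)) (n + 1)).det := by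
  have hlow : ∀ i : Fin n, firstRowMat a (n + 2) i.succ.succ 0 = 0 := fun i => by
    simp only [firstRowMat, Matrix.of_apply, Fin.val_succ, Fin.val_zero]
    rw [if_neg (by omega), H_of_neg (by omega)]
  have h₀ : (firstRowMat a (n + 2)).submatrix (Fin.succAbove 0) Fin.succ
      = firstRowMat (fun j => X j) (n + 1) := by
    refine Matrix.ext fun i j => ?_
    simp only [firstRowMat, Matrix.submatrix_apply, Matrix.of_apply, Fin.succAbove_zero,
      Fin.val_succ, Nat.add_one_ne_zero, if_false]
    split_ifs with hi
    · rw [hi, ← H_natCast_add_one]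
      push_cast
      ring_nf
    · push_cast
      ring_nf
  have h₁ : (firstRowMat a (n + 2)).submatrix (Fin.succ 0).succAbove Fin.succ
      = firstRowMat (fun j => a (j + 1)) (n + 1) := by
    refine Matrix.ext fun i j => ?_
    cases i using Fin.cases with
    | zero => simp [firstRowMat]
    | succ i =>
      simp only [firstRowMat, Matrix.submatrix_apply, Matrix.of_apply, Fin.val_succ]
      rw [Fin.succAbove_of_le_castSucc _ _ (by simp [Fin.le_def]), if_neg (by simp),
        if_neg (by simp)]
      simp only [Fin.val_succ]
      push_cast
      ring_nf
  rw [Matrix.det_succ_column_zero, Fin.sum_univ_succ, Fin.sum_univ_succ]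
  simp only [hlow, mul_zero, zero_mul, sum_const_zero, add_zero, h₀]
  rw [h₁]
  simp [firstRowMat, H]
  ring

lemma det_firstRowMat_zero (a : ℕ → Lam) : (firstRowMat a 0).det = 1 :=
  Matrix.det_isEmpty

lemma det_firstRowMat_eq_sum (n : ℕ) (a : ℕ → Lam) :
    (firstRowMat a (n + 1)).det
      = ∑ k ∈ range (n + 1), (-1 : ℝ) ^ k • (a k * (firstRowMat (fun j => X j) (n - k)).det) := by
  induction n generalizing a with
  | zero => simp [firstRowMat]
  | succ n ih =>
    rw [det_firstRowMat_succ_succ, ih fun j => a (j + 1), sum_range_succ' _ (n + 1)]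
    have hsign : ∀ k ∈ range (n + 1),
        (-1 : ℝ) ^ (k + 1) • (a (k + 1) * (firstRowMat (fun j => X j) (n + 1 - (k + 1))).det)
          = -((-1 : ℝ) ^ k • (a (k + 1) * (firstRowMat (fun j => X j) (n - k)).det)) :=
      fun k _ => by rw [Nat.add_sub_add_right, pow_succ, mul_neg_one, neg_smul]
    rw [sum_congr rfl hsign, sum_neg_distrib, pow_zero, one_smul, Nat.sub_zero]
    abel

/-- Solving `e_{n+1} = ∑_{k ≤ n} (-1)^k h_{k+1} e_{n-k}` for `h_{n+1}`. -/
lemma X_eq_sum_sF_colP (n : ℕ) :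
    X n = (-1 : ℝ) ^ n • (sF (colP (n + 1))
      - ∑ k ∈ range n, (-1 : ℝ) ^ k • (X k * sF (colP (n - k)))) := by
  simp only [sF_colP_eq_det_firstRowMat]
  rw [det_firstRowMat_eq_sum, sum_range_succ, Nat.sub_self, det_firstRowMat_zero, mul_one,
    add_sub_cancel_left, smul_smul, ← pow_add, ← two_mul, pow_mul, neg_one_sq, one_pow, one_smul]

section Agreement

variable (f g : Lam →ₐ[ℝ] Lam) (d : ℕ)

noncomputable def agreeSubmodule (n : ℤ) : Submodule ℝ Lam :=
  (degLE n).comap f.toLinearMap ⊓ (degLE n).comap g.toLinearMap ⊓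
    (degLE (n - d)).comap (f.toLinearMap - g.toLinearMap)

variable {f g d}

lemma mem_agreeSubmodule {n : ℤ} {P : Lam} :
    P ∈ agreeSubmodule f g d n ↔ f P ∈ degLE n ∧ g P ∈ degLE n ∧ f P - g P ∈ degLE (n - d) := by
  simp [agreeSubmodule, and_assoc]

lemma agreeSubmodule_mono {n n' : ℤ} (h : n ≤ n') :
    agreeSubmodule f g d n ≤ agreeSubmodule f g d n' := fun P hP => by
  obtain ⟨hf, hg, hfg⟩ := mem_agreeSubmodule.1 hP
  exact mem_agreeSubmodule.2
    ⟨mem_degLE_of_le h hf, mem_degLE_of_le h hg, mem_degLE_of_le (by omega) hfg⟩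

lemma one_mem_agreeSubmodule : (1 : Lam) ∈ agreeSubmodule f g d 0 :=
  mem_agreeSubmodule.2 ⟨by simpa using one_mem_degLE le_rfl, by simpa using one_mem_degLE le_rfl,
    by simp⟩

lemma mul_mem_agreeSubmodule {a b : ℤ} {P Q : Lam} (hP : P ∈ agreeSubmodule f g d a)
    (hQ : Q ∈ agreeSubmodule f g d b) : P * Q ∈ agreeSubmodule f g d (a + b) := by
  obtain ⟨hfP, hgP, hP⟩ := mem_agreeSubmodule.1 hP
  obtain ⟨hfQ, hgQ, hQ⟩ := mem_agreeSubmodule.1 hQ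
  refine mem_agreeSubmodule.2 ⟨by simpa using mul_mem_degLE hfP hfQ,
    by simpa using mul_mem_degLE hgP hgQ, ?_⟩
  have key : f (P * Q) - g (P * Q) = (f P - g P) * f Q + g P * (f Q - g Q) := by
    simp only [map_mul]
    ring
  rw [key]
  exact add_mem (mem_degLE_of_le (le_of_eq (by ring)) (mul_mem_degLE hP hfQ))
    (mem_degLE_of_le (le_of_eq (by ring)) (mul_mem_degLE hgP hQ))

lemma pow_mem_agreeSubmodule {a : ℤ} {P : Lam} (hP : P ∈ agreeSubmodule f g d a) (k : ℕ) :
    P ^ k ∈ agreeSubmodule f g d (k * a) := by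
  induction k with
  | zero => simpa using one_mem_agreeSubmodule
  | succ k ih => simpa [pow_succ, add_mul] using mul_mem_agreeSubmodule ih hP

lemma X_mem_agreeSubmodule (hE : ∀ n : ℕ, sF (colP n) ∈ agreeSubmodule f g d n) (n : ℕ) :
    X n ∈ agreeSubmodule f g d (n + 1) := by
  induction n using Nat.strong_induction_on with
  | _ n ih =>
  rw [X_eq_sum_sF_colP]
  refine Submodule.smul_mem _ _ (sub_mem (by exact_mod_cast hE (n + 1)) (Submodule.sum_mem _ ?_))
  intro k hk
  have hk := mem_range.1 hk
  refine Submodule.smul_mem _ _ (agreeSubmodule_mono ?_ (mul_mem_agreeSubmodule (ih k hk) (hE _)))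
  push_cast [hk.le]
  omega

lemma mem_agreeSubmodule_of_mem_degLE (hX : ∀ n : ℕ, X n ∈ agreeSubmodule f g d (n + 1))
    {n : ℤ} {P : Lam} (hP : P ∈ degLE n) : P ∈ agreeSubmodule f g d n := by
  have hmono : ∀ v : ℕ →₀ ℕ, monomial v 1 ∈ agreeSubmodule f g d (partSum id v) := by
    intro v
    induction v using Finsupp.induction with
    | zero => simpa using one_mem_agreeSubmodule
    | single_add a b v _ _ ih =>
      rw [monomial_single_add, map_add, partSum_single]
      simpa [mul_comm] using mul_mem_agreeSubmodule (pow_mem_agreeSubmodule (hX a) b) ih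
  rw [P.as_sum]
  refine Submodule.sum_mem _ fun v hv => ?_
  rw [← mul_one (coeff v P), ← smul_eq_mul, ← smul_monomial]
  exact Submodule.smul_mem _ _ (agreeSubmodule_mono (hP hv) (hmono v))

end Agreement

lemma IsSpTriangular.map_sub_map_mem_degLE {f g : Lam →ₐ[ℝ] Lam} {m m' : Ptn → Ptn → ℝ} {d : ℕ}
    (hf : IsSpTriangular f m) (hg : IsSpTriangular g m')
    (hcol : ∀ i j : ℕ, j < i → i - j < d → m (colP i) (colP j) = m' (colP i) (colP j))
    {n : ℤ} {P : Lam} (hP : P ∈ degLE n) : f P - g P ∈ degLE (n - d) := by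
  have hE : ∀ k : ℕ, sF (colP k) ∈ agreeSubmodule f g d k := fun k => by
    have hf' := hf.map_sF_mem_degLE (colP k)
    have hg' := hg.map_sF_mem_degLE (colP k)
    rw [size_colP] at hf' hg'
    exact mem_agreeSubmodule.2 ⟨hf', hg', hf.map_sF_colP_sub_mem_degLE hg hcol k⟩
  exact (mem_agreeSubmodule.1 (mem_agreeSubmodule_of_mem_degLE (X_mem_agreeSubmodule hE) hP)).2.2

theorem statement7_general (d : ℕ)
    (f ftil : Lam →ₐ[ℝ] Lam) (m mtil : Ptn → Ptn → ℝ)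
    (hf : IsSpTriangular f m) (hftil : IsSpTriangular ftil mtil)
    (h : ∀ i j : ℕ, j < i → i - j < d → m (colP i) (colP j) = mtil (colP i) (colP j)) :
    ∀ lam mu : Ptn, mu.dle lam → lam.size - mu.size < d → m lam mu = mtil lam mu := by
  intro lam mu hdle hsize
  have hdiff := hf.map_sub_map_mem_degLE hftil h (sF_mem_degLE lam)
  rw [hf.map_sF_eq_sum, hftil.map_sF_eq_sum, ← sum_sub_distrib] at hdiff
  simp_rw [← sub_smul] at hdiff
  exact sub_eq_zero.1 (eq_zero_of_sum_smul_spF_mem_degLE hdiff (by simpa using hdle) (by omega))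

/-- If the coefficient families of two sp-triangular homomorphisms agree on
all pairs of columns `((1^i), (1^j))` with `0 ≤ i - j < d`, then they agree on every pair
`μ ≤ λ` with `|λ| - |μ| < d`. -/
theorem statement7 (d : ℕ) (hd : 1 ≤ d)
    (f ftil : Lam →ₐ[ℝ] Lam) (m mtil : Ptn → Ptn → ℝ)
    (hf : IsSpTriangular f m) (hftil : IsSpTriangular ftil mtil)
    (h : ∀ i j : ℕ, j < i → i - j < d → m (colP i) (colP j) = mtil (colP i) (colP j)) :
    ∀ lam mu : Ptn, mu.dle lam → lam.size - mu.size < d → m lam mu = mtil lam mu :=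
  statement7_general d f ftil m mtil hf hftil h
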